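/- Generator identity for TASEP applied to the Vandermonde weight: for n ≥ 2, 1 ≤ ℓ ≤ n-1 and a tuple h = (h₁,...,h_ℓ) of distinct elements of ℤ/nℤ with Δ(h) := ∏_{j<k} |e^{2πi h_k/n} - e^{2πi h_j/n}|, one has Σ_{j : h_j+1 ∉ {h₁,...,h_ℓ}} (Δ(h + e_j) - Δ(h)) = (μ_{n,ℓ} - ℓ + Traffic(h)) · Δ(h), where μ_{n,ℓ} = sin(πℓ/n)/sin(π/n), Traffic(h) := #{j : h_j + 1 ∈ {h₁,...,h_ℓ}}, and h + e_j increments h_j by 1 mod n. -/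

import Mathlib

/-! Write `z_j = e^{2iθ_j}` with `θ_j = π h_j / n`. Moving particle `j` one step multiplies
each chord `|z_j - z_k|` by `r_{jk} = sin(θ_j - θ_k + π/n) / sin(θ_j - θ_k)`, which is nonnegative
because `θ_j - θ_k` and `θ_j - θ_k + π/n` lie in the same half of `[-π, π]`. Hence
`Σ_j Δ(h + e_j) = Δ(h) Σ_j ∏_{k ≠ j} r_{jk}`, and the terms of blocked particles are zero anyway,
since moving them creates a collision. Finally `e^{i(ℓ-1)π/n} ∏_{k ≠ j} r_{jk} = L_j(ω z_j)` for
the Lagrange basis `L_j` at the nodes `z` and `ω = e^{2πi/n}`, and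
`Σ_j L_j(t z_j) = 1 + t + ⋯ + t^{ℓ-1}` because the coefficient of `x^i` in `Σ_j z_j^i L_j(x) = x^i`
is `1`; at `t = ω` this geometric sum is `e^{i(ℓ-1)π/n} sin(πℓ/n) / sin(π/n)`. -/
/-- The Vandermonde-type weight `Δ(g) = ∏_{j<k} |e^{2πi g_k/n} - e^{2πi g_j/n}|` on
`ℓ`-tuples of elements of `ℤ/nℤ`. -/
noncomputable def DeltaWeight (n ℓ : ℕ) (g : Fin ℓ → ZMod n) : ℝ :=
  ∏ p ∈ Finset.univ.filter (fun p : Fin ℓ × Fin ℓ => p.1 < p.2),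
    ‖(Complex.exp (2 * Real.pi * Complex.I * ((g p.2).val : ℂ) / n)
      - Complex.exp (2 * Real.pi * Complex.I * ((g p.1).val : ℂ) / n))‖

open Finset Complex

namespace Lagrange

open Polynomial

variable {F : Type*} [Field F] {ι : Type*} [DecidableEq ι]

theorem eval_basis (s : Finset ι) (v : ι → F) (j : ι) (x : F) :
    (Lagrange.basis s v j).eval x = ∏ k ∈ s.erase j, (x - v k) / (v j - v k) := by
  simp only [Lagrange.basis, basisDivisor, eval_prod, eval_mul, eval_C, eval_sub, eval_X]
  exact prod_congr rfl fun _ _ => by rw [div_eq_inv_mul]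

theorem sum_pow_mul_coeff_basis {s : Finset ι} {v : ι → F} (hvs : Set.InjOn v s) {i : ℕ}
    (hi : i < #s) : ∑ j ∈ s, v j ^ i * (Lagrange.basis s v j).coeff i = 1 := by
  have h := congrArg (coeff · i) (eq_interpolate hvs (f := X ^ i) (by
    rw [degree_X_pow]; exact_mod_cast hi))
  simpa only [interpolate_apply, eval_pow, eval_X, finsetSum_coeff, coeff_C_mul,
    coeff_X_pow_self] using h.symm

theorem sum_prod_erase_mul_sub_div {s : Finset ι} {v : ι → F} (hvs : Set.InjOn v s) (t : F) :
    ∑ j ∈ s, ∏ k ∈ s.erase j, (t * v j - v k) / (v j - v k) = ∑ i ∈ range #s, t ^ i := by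
  have hdeg : ∀ j ∈ s, (Lagrange.basis s v j).natDegree < #s := fun j hj => by
    rw [natDegree_basis hvs hj]; exact Nat.sub_lt (card_pos.mpr ⟨j, hj⟩) one_pos
  calc ∑ j ∈ s, ∏ k ∈ s.erase j, (t * v j - v k) / (v j - v k)
      = ∑ j ∈ s, ∑ i ∈ range #s, t ^ i * (v j ^ i * (Lagrange.basis s v j).coeff i) :=
        sum_congr rfl fun j hj => by
          rw [← eval_basis, eval_eq_sum_range' (hdeg j hj)]
          exact sum_congr rfl fun i _ => by ring
    _ = ∑ i ∈ range #s, t ^ i := by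
        rw [sum_comm]
        exact sum_congr rfl fun i hi => by
          rw [← mul_sum, sum_pow_mul_coeff_basis hvs (mem_range.mp hi), mul_one]

end Lagrange

namespace Complex

theorem exp_two_mul_I_sub_exp_two_mul_I (x y : ℝ) :
    exp (2 * x * I) - exp (2 * y * I) = 2 * I * exp ((x + y) * I) * Real.sin (x - y) := by
  have hx : exp (2 * x * I) = exp ((x + y) * I) * exp ((x - y) * I) := by
    rw [← exp_add]; ring_nf
  have hy : exp (2 * y * I) = exp ((x + y) * I) * exp (-((x - y) * I)) := by
    rw [← exp_add]; ring_nf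
  rw [hx, hy, ofReal_sin, Complex.sin]
  push_cast
  ring_nf
  rw [I_sq]
  ring

theorem norm_exp_two_mul_I_sub_exp_two_mul_I (x y : ℝ) :
    ‖exp (2 * x * I) - exp (2 * y * I)‖ = 2 * |Real.sin (x - y)| := by
  rw [exp_two_mul_I_sub_exp_two_mul_I, ← ofReal_add, norm_mul, norm_mul, norm_mul,
    norm_exp_ofReal_mul_I, norm_I, norm_real, Real.norm_eq_abs, Complex.norm_two, mul_one, mul_one]

theorem exp_mul_exp_sub_div_exp_sub (x y φ : ℝ) :
    (exp (2 * φ * I) * exp (2 * x * I) - exp (2 * y * I)) / (exp (2 * x * I) - exp (2 * y * I))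
      = exp (φ * I) * (Real.sin (x - y + φ) / Real.sin (x - y) : ℝ) := by
  have hshift : exp (2 * φ * I) * exp (2 * x * I) = exp (2 * ↑(x + φ) * I) := by
    rw [← exp_add]; push_cast; ring_nf
  rw [hshift, exp_two_mul_I_sub_exp_two_mul_I, exp_two_mul_I_sub_exp_two_mul_I,
    show x + φ - y = x - y + φ by ring,
    show ((x + φ : ℝ) + y : ℂ) * I = φ * I + (x + y) * I by push_cast; ring, exp_add, ofReal_div]
  field_simp [exp_ne_zero]

theorem exp_mul_I_mul_geom_sum_mul_sin (φ : ℝ) (m : ℕ) :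
    exp (φ * I) * (∑ i ∈ range m, exp (2 * φ * I) ^ i) * Real.sin φ
      = exp (m * φ * I) * Real.sin (m * φ) := by
  have h1 := exp_two_mul_I_sub_exp_two_mul_I φ 0
  have hm := exp_two_mul_I_sub_exp_two_mul_I (m * φ) 0
  simp only [ofReal_zero, mul_zero, zero_mul, exp_zero, add_zero, sub_zero, ofReal_mul,
    ofReal_natCast] at h1 hm
  have hgeom := geom_sum_mul (exp (2 * φ * I)) m
  rw [← exp_nat_mul, h1, show (m : ℂ) * (2 * φ * I) = 2 * (m * φ) * I by ring, hm] at hgeom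
  have h2I : (2 * I : ℂ) ≠ 0 := mul_ne_zero two_ne_zero I_ne_zero
  apply mul_left_cancel₀ h2I
  linear_combination hgeom

end Complex

theorem Finset.prod_filter_lt_eq_prod_erase_mul {ι M : Type*} [LinearOrder ι] [Fintype ι]
    [CommMonoid M] (f : ι → ι → M) (hf : ∀ i k, f i k = f k i) (j : ι) :
    ∏ p ∈ univ.filter (fun p : ι × ι => p.1 < p.2), f p.1 p.2
      = (∏ k ∈ univ.erase j, f j k)
        * ∏ p ∈ univ.filter (fun p : ι × ι => p.1 < p.2 ∧ p.1 ≠ j ∧ p.2 ≠ j), f p.1 p.2 := by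
  rw [← prod_filter_mul_prod_filter_not _ (fun p : ι × ι => p.1 = j ∨ p.2 = j), filter_filter,
    filter_filter]
  congr 1
  · have himage : (univ.filter fun p : ι × ι => p.1 < p.2 ∧ (p.1 = j ∨ p.2 = j))
        = (univ.erase j).image fun k => (min j k, max j k) := by
      ext ⟨a, b⟩
      simp only [mem_filter, mem_univ, true_and, mem_image, mem_erase, Prod.mk.injEq]
      constructor
      · rintro ⟨hab, rfl | rfl⟩
        · exact ⟨b, ⟨hab.ne', trivial⟩, by simp [hab.le]⟩
        · exact ⟨a, ⟨hab.ne, trivial⟩, by simp [hab.le]⟩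
      · rintro ⟨k, ⟨hkj, -⟩, rfl, rfl⟩
        rcases lt_or_gt_of_ne hkj with h | h <;> simp [h, h.le]
    rw [himage, prod_image]
    · refine prod_congr rfl fun k _ => ?_
      rcases le_total j k with h | h
      · simp [h]
      · simp [h, hf j k]
    · intro k hk k' hk' h
      simp only [coe_erase, coe_univ, Set.mem_sdiff, Set.mem_singleton_iff, Prod.mk.injEq]
        at hk hk' h
      grind
  · refine prod_congr (filter_congr fun p _ => ?_) fun _ _ => rfl
    tauto

theorem Real.sum_prod_sin_add_div_sin {ι : Type*} [Fintype ι] [DecidableEq ι] (θ : ι → ℝ)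
    (hθ : Pairwise fun j k => Real.sin (θ j - θ k) ≠ 0) {φ : ℝ} (hφ : Real.sin φ ≠ 0) :
    ∑ j, ∏ k ∈ univ.erase j, Real.sin (θ j - θ k + φ) / Real.sin (θ j - θ k)
      = Real.sin (Fintype.card ι * φ) / Real.sin φ := by
  set r : ι → ι → ℝ := fun j k => Real.sin (θ j - θ k + φ) / Real.sin (θ j - θ k)
  set z : ι → ℂ := fun j => cexp (2 * θ j * I)
  set e : ℂ := cexp (φ * I)
  have hinj : Set.InjOn z (univ : Finset ι) := fun j _ k _ hjk => by
    by_contra hne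
    have hz := exp_two_mul_I_sub_exp_two_mul_I (θ j) (θ k)
    rw [show cexp (2 * θ j * I) = cexp (2 * θ k * I) from hjk, sub_self] at hz
    exact (mul_ne_zero (mul_ne_zero (mul_ne_zero two_ne_zero I_ne_zero) (Complex.exp_ne_zero _))
      (ofReal_ne_zero.mpr (hθ hne))) hz.symm
  have hterm : ∀ j, e * ∏ k ∈ univ.erase j, (cexp (2 * φ * I) * z j - z k) / (z j - z k)
      = e ^ Fintype.card ι * ∏ k ∈ univ.erase j, (r j k : ℂ) := fun j => by
    rw [prod_congr rfl fun k _ => exp_mul_exp_sub_div_exp_sub (θ j) (θ k) φ, prod_mul_distrib,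
      prod_const, ← mul_assoc, ← pow_succ', card_erase_add_one (mem_univ j), card_univ]
  have hsum := Lagrange.sum_prod_erase_mul_sub_div hinj (cexp (2 * φ * I))
  rw [card_univ] at hsum
  have key : e ^ Fintype.card ι * ((∑ j, ∏ k ∈ univ.erase j, r j k : ℝ) * Real.sin φ : ℝ)
      = e ^ Fintype.card ι * Real.sin (Fintype.card ι * φ) :=
    calc _ = e * (∑ j, ∏ k ∈ univ.erase j, (cexp (2 * φ * I) * z j - z k) / (z j - z k))
          * Real.sin φ := by
            rw [mul_sum, sum_congr rfl fun j _ => hterm j, ← mul_sum]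
            simp only [ofReal_mul, ofReal_sum, ofReal_prod, mul_assoc]
      _ = _ := by
        rw [hsum, exp_mul_I_mul_geom_sum_mul_sin, ← Complex.exp_nat_mul, ← mul_assoc]
  rw [eq_div_iff hφ]
  exact_mod_cast mul_left_cancel₀ (pow_ne_zero _ (Complex.exp_ne_zero _)) key

namespace ZMod

noncomputable def halfAngle (n : ℕ) (a : ZMod n) : ℝ := Real.pi * a.val / n

variable {n : ℕ} [NeZero n]

theorem toCircle_eq_exp_halfAngle (a : ZMod n) :
    (toCircle a : ℂ) = cexp (2 * halfAngle n a * I) := by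
  rw [toCircle_apply, halfAngle]; push_cast; ring_nf

theorem toCircle_add_one (a : ZMod n) :
    (toCircle (a + 1) : ℂ) = cexp (2 * ↑(halfAngle n a + Real.pi / n) * I) := by
  have h1 : (toCircle (1 : ZMod n) : ℂ) = cexp (2 * Real.pi * I * 1 / n) := by
    simpa using toCircle_natCast (N := n) 1
  rw [AddChar.map_add_eq_mul, Circle.coe_mul, toCircle_eq_exp_halfAngle, h1, ← Complex.exp_add]
  push_cast; ring_nf

theorem halfAngle_sub_bounds {a b : ZMod n} (hab : a ≠ b) :
    (0 < halfAngle n a - halfAngle n b ∧ halfAngle n a - halfAngle n b + Real.pi / n ≤ Real.pi) ∨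
      (-Real.pi < halfAngle n a - halfAngle n b ∧
        halfAngle n a - halfAngle n b + Real.pi / n ≤ 0) := by
  have hn : (0 : ℝ) < n := by simp [Nat.pos_of_neZero n]
  have hu : 0 < Real.pi / n := div_pos Real.pi_pos hn
  have hx : halfAngle n a - halfAngle n b = ((a.val : ℝ) - b.val) * (Real.pi / n) := by
    simp only [halfAngle]; ring
  have hpi : Real.pi = n * (Real.pi / n) := by field_simp [hn.ne']
  have ha : (a.val : ℝ) + 1 ≤ n := by exact_mod_cast a.val_lt
  have hb : (b.val : ℝ) + 1 ≤ n := by exact_mod_cast b.val_lt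
  rw [hx]
  rcases lt_or_gt_of_ne ((ZMod.val_injective n).ne hab) with hlt | hgt
  · have : (a.val : ℝ) + 1 ≤ b.val := by exact_mod_cast hlt
    right; constructor <;> nlinarith
  · have : (b.val : ℝ) + 1 ≤ a.val := by exact_mod_cast hgt
    left; constructor <;> nlinarith

theorem sin_halfAngle_sub_ne_zero {a b : ZMod n} (hab : a ≠ b) :
    Real.sin (halfAngle n a - halfAngle n b) ≠ 0 := by
  have hu : 0 < Real.pi / n := div_pos Real.pi_pos (by simp [Nat.pos_of_neZero n])
  rcases halfAngle_sub_bounds hab with ⟨h0, hπ⟩ | ⟨hπ, h0⟩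
  · exact (Real.sin_pos_of_pos_of_lt_pi h0 (by linarith)).ne'
  · exact (Real.sin_neg_of_neg_of_neg_pi_lt (by linarith) hπ).ne

theorem sin_halfAngle_sub_add_div_sin_nonneg {a b : ZMod n} (hab : a ≠ b) :
    0 ≤ Real.sin (halfAngle n a - halfAngle n b + Real.pi / n)
      / Real.sin (halfAngle n a - halfAngle n b) := by
  have hu : 0 < Real.pi / n := div_pos Real.pi_pos (by simp [Nat.pos_of_neZero n])
  rcases halfAngle_sub_bounds hab with ⟨h0, hπ⟩ | ⟨hπ, h0⟩
  · exact div_nonneg (Real.sin_nonneg_of_nonneg_of_le_pi (by linarith) hπ)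
      (Real.sin_nonneg_of_nonneg_of_le_pi h0.le (by linarith))
  · exact div_nonneg_of_nonpos (Real.sin_nonpos_of_nonpos_of_neg_pi_le h0 (by linarith))
      (Real.sin_nonpos_of_nonpos_of_neg_pi_le (by linarith) hπ.le)

theorem norm_toCircle_add_one_sub {a b : ZMod n} (hab : a ≠ b) :
    ‖(toCircle (a + 1) : ℂ) - toCircle b‖
      = Real.sin (halfAngle n a - halfAngle n b + Real.pi / n)
          / Real.sin (halfAngle n a - halfAngle n b) * ‖(toCircle a : ℂ) - toCircle b‖ := by
  rw [toCircle_add_one, toCircle_eq_exp_halfAngle, toCircle_eq_exp_halfAngle,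
    norm_exp_two_mul_I_sub_exp_two_mul_I, norm_exp_two_mul_I_sub_exp_two_mul_I,
    ← abs_of_nonneg (sin_halfAngle_sub_add_div_sin_nonneg hab), ← mul_assoc, mul_comm _ 2,
    mul_assoc, ← abs_mul, div_mul_cancel₀ _ (sin_halfAngle_sub_ne_zero hab), add_sub_right_comm]

end ZMod

theorem DeltaWeight_eq_prod_toCircle {n ℓ : ℕ} [NeZero n] (g : Fin ℓ → ZMod n) :
    DeltaWeight n ℓ g = ∏ p ∈ univ.filter (fun p : Fin ℓ × Fin ℓ => p.1 < p.2),
      ‖(ZMod.toCircle (g p.2) : ℂ) - ZMod.toCircle (g p.1)‖ := by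
  simp only [DeltaWeight, ZMod.toCircle_apply]

theorem DeltaWeight_eq_zero_of_not_injective {n ℓ : ℕ} {g : Fin ℓ → ZMod n}
    (hg : ¬ Function.Injective g) : DeltaWeight n ℓ g = 0 := by
  obtain ⟨i, k, hik, hne⟩ := Function.not_injective_iff.mp hg
  rcases lt_or_gt_of_ne hne with hlt | hgt
  · exact prod_eq_zero (i := (i, k)) (by simpa using hlt) (by simp [hik])
  · exact prod_eq_zero (i := (k, i)) (by simpa using hgt) (by simp [hik])

theorem DeltaWeight_update {n ℓ : ℕ} [NeZero n] (g : Fin ℓ → ZMod n) (j : Fin ℓ) (a : ZMod n) :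
    DeltaWeight n ℓ (Function.update g j a)
      = (∏ k ∈ univ.erase j, ‖(ZMod.toCircle (g k) : ℂ) - ZMod.toCircle a‖)
        * ∏ p ∈ univ.filter (fun p : Fin ℓ × Fin ℓ => p.1 < p.2 ∧ p.1 ≠ j ∧ p.2 ≠ j),
            ‖(ZMod.toCircle (g p.2) : ℂ) - ZMod.toCircle (g p.1)‖ := by
  rw [DeltaWeight_eq_prod_toCircle, prod_filter_lt_eq_prod_erase_mul
    (fun i k => ‖(ZMod.toCircle (Function.update g j a k) : ℂ)
      - ZMod.toCircle (Function.update g j a i)‖) (fun _ _ => norm_sub_rev _ _) j]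
  congr 1
  · exact prod_congr rfl fun k hk => by
      rw [Function.update_self, Function.update_of_ne (ne_of_mem_erase hk)]
  · refine prod_congr rfl fun p hp => ?_
    obtain ⟨-, h1, h2⟩ := (mem_filter.mp hp).2
    rw [Function.update_of_ne h1, Function.update_of_ne h2]

theorem DeltaWeight_update_add_one {n ℓ : ℕ} [NeZero n] {h : Fin ℓ → ZMod n}
    (hinj : Function.Injective h) (j : Fin ℓ) :
    DeltaWeight n ℓ (Function.update h j (h j + 1))
      = (∏ k ∈ univ.erase j,
          Real.sin (ZMod.halfAngle n (h j) - ZMod.halfAngle n (h k) + Real.pi / n)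
            / Real.sin (ZMod.halfAngle n (h j) - ZMod.halfAngle n (h k))) * DeltaWeight n ℓ h := by
  have hΔ := DeltaWeight_update h j (h j)
  rw [Function.update_eq_self] at hΔ
  rw [DeltaWeight_update, hΔ, ← mul_assoc, ← prod_mul_distrib]
  congr 1
  refine prod_congr rfl fun k hk => ?_
  rw [norm_sub_rev, ZMod.norm_toCircle_add_one_sub (hinj.ne (ne_of_mem_erase hk).symm),
    norm_sub_rev]

theorem tasep_generator_vandermonde_general (n ℓ : ℕ) [NeZero n] (hn : 2 ≤ n)
    (h : Fin ℓ → ZMod n) (hinj : Function.Injective h) :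
    ∑ j ∈ Finset.univ.filter (fun j : Fin ℓ => ¬ ∃ k, h k = h j + 1),
        (DeltaWeight n ℓ (Function.update h j (h j + 1)) - DeltaWeight n ℓ h)
    = (Real.sin (Real.pi * ℓ / n) / Real.sin (Real.pi / n) - (ℓ : ℝ) +
        ((Finset.univ.filter (fun j : Fin ℓ => ∃ k, h k = h j + 1)).card : ℝ)) *
        DeltaWeight n ℓ h := by
  have : Fact (1 < n) := ⟨hn⟩
  have hblocked : ∀ j, (∃ k, h k = h j + 1) →
      DeltaWeight n ℓ (Function.update h j (h j + 1)) = 0 := by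
    rintro j ⟨k, hk⟩
    refine DeltaWeight_eq_zero_of_not_injective fun hinj' => ?_
    have hkj : k ≠ j := by rintro rfl; simp at hk
    exact hkj (hinj' (by simp [Function.update_of_ne hkj, hk]))
  have hsin : Real.sin (Real.pi / n) ≠ 0 :=
    (Real.sin_pos_of_pos_of_lt_pi (by positivity)
      (div_lt_self Real.pi_pos (by exact_mod_cast hn))).ne'
  have hμ := Real.sum_prod_sin_add_div_sin (fun j => ZMod.halfAngle n (h j))
    (fun j k hjk => ZMod.sin_halfAngle_sub_ne_zero (hinj.ne hjk)) hsin
  have hcard : ((univ.filter fun j : Fin ℓ => ¬ ∃ k, h k = h j + 1).card : ℝ)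
      = ℓ - (univ.filter fun j : Fin ℓ => ∃ k, h k = h j + 1).card := by
    rw [eq_sub_iff_add_eq', ← Nat.cast_add, card_filter_add_card_filter_not, card_fin]
  rw [Fintype.card_fin, mul_div_assoc', mul_comm _ Real.pi] at hμ
  rw [sum_sub_distrib, sum_filter_of_ne fun j _ hj => mt (hblocked j) hj,
    sum_congr rfl fun j _ => DeltaWeight_update_add_one hinj j, ← sum_mul, hμ, sum_const,
    nsmul_eq_mul, hcard]
  ring

/-- Generator identity for TASEP applied to the Vandermonde weight:
`Σ_{j : h_j+1 ∉ h} (Δ(h+e_j) - Δ(h)) = (μ_{n,ℓ} - ℓ + Traffic(h)) Δ(h)`. -/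
theorem tasep_generator_vandermonde (n ℓ : ℕ) [NeZero n] (hn : 2 ≤ n) (hℓ1 : 1 ≤ ℓ)
    (hℓn : ℓ ≤ n - 1) (h : Fin ℓ → ZMod n) (hinj : Function.Injective h) :
    ∑ j ∈ Finset.univ.filter (fun j : Fin ℓ => ¬ ∃ k, h k = h j + 1),
        (DeltaWeight n ℓ (Function.update h j (h j + 1)) - DeltaWeight n ℓ h)
    = (Real.sin (Real.pi * ℓ / n) / Real.sin (Real.pi / n) - (ℓ : ℝ) +
        ((Finset.univ.filter (fun j : Fin ℓ => ∃ k, h k = h j + 1)).card : ℝ)) *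
        DeltaWeight n ℓ h :=
  tasep_generator_vandermonde_general n ℓ hn h hinj
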